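/- arXiv:2511.18554 — 3 statements merged into one kernel-verified Lean document; each statement's English description precedes it below -/
import Mathlib

section
/- Let $p_{\max} > p_{\min} > 0$, $\gamma, \delta \geq 0$, $c, \varepsilon \geq 0$ with $c + \varepsilon \leq 1$, $T \geq 1$, $\kappa = \gamma + \delta$, and let $\alpha > 0$. Define $\phi_b(w) = p_{\max} + 2\gamma + p_{\min} c + A \exp(w/\alpha)$ for $w \in [0,1]$, where $A = \frac{p_{\max}(1+c+\varepsilon) + 2\kappa}{\alpha} - \left(p_{\max}(1+\varepsilon) + p_{\min} c + \frac{2\kappa}{T}\right)$. Then for all $w \in [0,1]$: $\int_0^w \phi_b(u)\,du + (1-w)(p_{\max}+2\gamma) + p_{\max}(c+\varepsilon) + 2\delta - c w p_{\min} = \alpha\left[\phi_b(w) - 2\gamma + \varepsilon p_{\max} + \frac{2\kappa}{T}\right]$. -/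
/-- Threshold-function relation for base-demand drivers (Lemma 4.4). -/
theorem paad_base_threshold_relation
    (pmin pmax γ δ c ε T α : ℝ)
    (hpmin : 0 < pmin) (hp : pmin < pmax)
    (hγ : 0 ≤ γ) (hδ : 0 ≤ δ)
    (hc : 0 ≤ c) (hε : 0 ≤ ε) (hcε : c + ε ≤ 1)
    (hT : 1 ≤ T) (hα : 0 < α)
    (κ : ℝ) (hκ : κ = γ + δ)
    (A : ℝ)
    (hA : A = (pmax * (1 + c + ε) + 2 * κ) / α - (pmax * (1 + ε) + pmin * c + 2 * κ / T))
    (φb : ℝ → ℝ)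
    (hφ : ∀ w : ℝ, φb w = pmax + 2 * γ + pmin * c + A * Real.exp (w / α)) :
    ∀ w ∈ Set.Icc (0:ℝ) 1,
      (∫ u in (0:ℝ)..w, φb u) + (1 - w) * (pmax + 2 * γ) + pmax * (c + ε) + 2 * δ
          - c * w * pmin
        = α * (φb w - 2 * γ + ε * pmax + 2 * κ / T) := by
  intro w hw
  have hexp : (∫ u in (0:ℝ)..w, Real.exp (u / α))
      = α * (Real.exp (w / α) - 1) := by
    rw [intervalIntegral.integral_comp_div (fun x => Real.exp x) hα.ne',
      integral_exp]
    simp only [smul_eq_mul, zero_div, Real.exp_zero]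
  have hcont : Continuous fun u : ℝ => A * Real.exp (u / α) := by fun_prop
  have hint : (∫ u in (0:ℝ)..w, φb u)
      = (pmax + 2 * γ + pmin * c) * w + A * (α * (Real.exp (w / α) - 1)) := by
    have h1 : (∫ u in (0:ℝ)..w, φb u)
        = (∫ u in (0:ℝ)..w, ((pmax + 2 * γ + pmin * c) + A * Real.exp (u / α))) :=
      intervalIntegral.integral_congr fun u _ => hφ u
    rw [h1, intervalIntegral.integral_add intervalIntegrable_const
        (hcont.intervalIntegrable 0 w), intervalIntegral.integral_const_mul, hexp]
    simp only [intervalIntegral.integral_const, smul_eq_mul, sub_zero]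
    ring
  rw [hint, hφ w, hA, hκ]
  field_simp
  ring
end

section
/- Let $p_{\max} > p_{\min} > 0$, $\gamma, \delta \geq 0$, $c, \varepsilon \geq 0$ with $c+\varepsilon \leq 1$, $T \geq 1$, $\kappa = \gamma+\delta$, $\omega = \frac{1+c+\varepsilon}{1+\varepsilon}$, and $\alpha' > 0$. Define $\phi_f(w) = p_{\max} + p_{\min} c + 2\gamma + B \exp(w/\alpha')$ with $B = \frac{p_{\max}+2\gamma}{\alpha'} - \left(p_{\max} + p_{\min} c + \frac{2\gamma}{T}\omega\right)$, and $\psi_f(v) = p_{\max}(c+\varepsilon) + 2\delta + C \exp(v/\alpha')$ with $C = \frac{p_{\max}(c+\varepsilon)+2\delta}{\alpha'} - \left(p_{\max}(c+\varepsilon) + \frac{2\delta}{T}\omega\right)$. Then for all $w \in [0,1]$ and $v \in [0,w]$: $\int_0^w \phi_f(u)\,du + (1-w)(p_{\max}+2\gamma) - c w p_{\min} + \int_0^v \psi_f(z)\,dz + (1-v)(p_{\max}(c+\varepsilon)+2\delta) = \alpha'\left[\phi_f(w) + \psi_f(v) - 2\kappa + \frac{2\kappa\omega}{T}\right]$. 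-/
lemma aux_int (a B α' w : ℝ) (hα' : α' ≠ 0) :
    ∫ u in (0:ℝ)..w, (a + B * Real.exp (u / α')) =
      a * w + α' * B * (Real.exp (w / α') - 1) := by
  have h1 : ∫ u in (0:ℝ)..w, Real.exp (u / α') = α' * (Real.exp (w / α') - 1) := by
    rw [intervalIntegral.integral_comp_div (f := Real.exp) hα']
    simp [integral_exp, mul_comm]

  rw [intervalIntegral.integral_add (by apply Continuous.intervalIntegrable; fun_prop) (by apply Continuous.intervalIntegrable; fun_prop),
    intervalIntegral.integral_const_mul, h1]
  simp; ring

/-- Threshold-function relation for flexible-demand drivers (Lemma 4.5). -/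
theorem paad_flexible_threshold_relation
    (pmin pmax γ δ c ε T α' : ℝ)
    (hpmin : 0 < pmin) (hp : pmin < pmax)
    (hγ : 0 ≤ γ) (hδ : 0 ≤ δ)
    (hc : 0 ≤ c) (hε : 0 ≤ ε) (hcε : c + ε ≤ 1)
    (hT : 1 ≤ T) (hα' : 0 < α')
    (κ ω : ℝ) (hκ : κ = γ + δ) (hω : ω = (1 + c + ε) / (1 + ε))
    (B C : ℝ)
    (hB : B = (pmax + 2 * γ) / α' - (pmax + pmin * c + 2 * γ / T * ω))
    (hC : C = (pmax * (c + ε) + 2 * δ) / α' - (pmax * (c + ε) + 2 * δ / T * ω))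
    (φf ψf : ℝ → ℝ)
    (hφ : ∀ w : ℝ, φf w = pmax + pmin * c + 2 * γ + B * Real.exp (w / α'))
    (hψ : ∀ v : ℝ, ψf v = pmax * (c + ε) + 2 * δ + C * Real.exp (v / α')) :
    ∀ w ∈ Set.Icc (0:ℝ) 1, ∀ v ∈ Set.Icc (0:ℝ) w,
      (∫ u in (0:ℝ)..w, φf u) + (1 - w) * (pmax + 2 * γ) - c * w * pmin
          + (∫ z in (0:ℝ)..v, ψf z) + (1 - v) * (pmax * (c + ε) + 2 * δ)
        = α' * (φf w + ψf v - 2 * κ + 2 * κ * ω / T) := by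
  intro w hw v hv
  simp only [hφ, hψ]
  rw [aux_int _ _ _ _ hα'.ne', aux_int _ _ _ _ hα'.ne']
  have hT0 : T ≠ 0 := by positivity
  subst hB hC hκ
  field_simp
  ring
end

section
/- Let $p_{\max} > p_{\min} > 0$, $c, \varepsilon, \gamma, \delta \geq 0$, $T \geq 1$, $\kappa = \gamma + \delta$, $P = (1+c+\varepsilon)p_{\max}$. Define $\alpha_B = \left[W\left(-\frac{((1+c)p_{\max} - p_{\min})\exp\left(-\frac{P + 2\delta + 2\gamma/T}{P + 2\kappa}\right)}{P + 2\kappa}\right) + \frac{P + 2\delta + 2\gamma/T}{P + 2\kappa}\right]^{-1}$. Then $\alpha_B$ is the unique positive solution of the equation $1 = \alpha \ln\left[\frac{(1+c)p_{\max} - p_{\min}}{(1+c)p_{\max} - \frac{P + 2\kappa}{\alpha} + \frac{2\gamma}{T} + p_{\max}\varepsilon + 2\delta}\right]$ (assuming parameters are such that the logarithm argument is positive at $\alpha = \alpha_B$). -/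
lemma mulexp_strictMonoOn : StrictMonoOn (fun x : ℝ => x * Real.exp x) (Set.Ici (-1)) := by
  apply strictMonoOn_of_deriv_pos (convex_Ici _)
  · exact (continuous_id.mul Real.continuous_exp).continuousOn
  · intro x hx
    rw [interior_Ici] at hx
    have h : HasDerivAt (fun x : ℝ => x * Real.exp x) (1 * Real.exp x + x * Real.exp x) x :=
      (hasDerivAt_id x).mul (Real.hasDerivAt_exp x)
    rw [h.deriv]
    simp only [Set.mem_Ioi] at hx
    nlinarith [Real.exp_pos x]

lemma key_lemma (A B S w : ℝ) (hA : 0 < A) (hAB : A < B) (hBS : B ≤ S) (hS : 0 < S)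
    (hw1 : -1 ≤ w)
    (hwe : w * Real.exp w = -(A * Real.exp (-(B / S))) / S) :
    (0 < (w + B / S)⁻¹ ∧
      1 = (w + B / S)⁻¹ * Real.log (A / (B - S / (w + B / S)⁻¹))) ∧
    ∀ α : ℝ, 0 < α → 0 < A / (B - S / α) → 1 = α * Real.log (A / (B - S / α)) →
      α = (w + B / S)⁻¹ := by
  have hSne : S ≠ 0 := hS.ne'
  have hB : 0 < B := hA.trans hAB
  have hE : 0 < Real.exp (-(B / S)) := Real.exp_pos _
  have hBS1 : -(1:ℝ) ≤ -(B / S) := by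
    have : B / S ≤ 1 := (div_le_one hS).2 hBS
    linarith
  -- w > -(B/S)
  have hwgt : -(B / S) < w := by
    by_contra h
    push_neg at h
    have hmono := mulexp_strictMonoOn.monotoneOn (Set.mem_Ici.2 hw1) (Set.mem_Ici.2 hBS1) h
    rw [hwe] at hmono
    have h3 : (-(B / S)) * Real.exp (-(B / S)) = -(B * Real.exp (-(B / S))) / S := by
      field_simp
    rw [h3] at hmono
    have h4 : -(A * Real.exp (-(B / S))) ≤ -(B * Real.exp (-(B / S))) := by
      have := (div_le_div_iff_of_pos_right hS).1 hmono
      linarith [this]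
    nlinarith [hE, hAB]
  have hwpos : 0 < w + B / S := by linarith
  have hwne : w + B / S ≠ 0 := hwpos.ne'
  have hαpos : 0 < (w + B / S)⁻¹ := inv_pos.2 hwpos
  -- w < 0
  have hwneg : w < 0 := by
    have hz_neg : -(A * Real.exp (-(B / S))) / S < 0 := by
      apply div_neg_of_neg_of_pos _ hS
      have := mul_pos hA hE
      linarith
    by_contra h
    push_neg at h
    nlinarith [Real.exp_pos w, hwe]
  have hden2 : B - S / (w + B / S)⁻¹ = -(S * w) := by
    rw [div_eq_mul_inv, inv_inv]
    field_simp
    ring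
  have hSw : 0 < -(S * w) := by nlinarith
  -- A / (-(S*w)) = exp (w + B/S)
  have h5 : A * Real.exp (-(B / S)) = -(S * w) * Real.exp w := by
    have h := hwe
    rw [eq_div_iff hSne] at h
    linear_combination h
  have harg_eq : A / (-(S * w)) = Real.exp (w + B / S) := by
    rw [div_eq_iff hSw.ne']
    have h7 : Real.exp (w + B / S) * Real.exp (-(B / S)) = Real.exp w := by
      rw [← Real.exp_add]; ring_nf
    apply mul_right_cancel₀ hE.ne'
    linear_combination h5 + S * w * h7
  constructor
  · refine ⟨hαpos, ?_⟩
    rw [hden2, harg_eq, Real.log_exp, inv_mul_cancel₀ hwne]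
  · intro α hα harg heq
    have hαne : α ≠ 0 := hα.ne'
    have hd : 0 < B - S / α := by
      by_contra h
      push_neg at h
      have : A / (B - S / α) ≤ 0 := div_nonpos_of_nonneg_of_nonpos hA.le h
      linarith
    have hlog : Real.log (A / (B - S / α)) = 1 / α := by
      field_simp at heq ⊢
      linarith [heq]
    have hexp : A / (B - S / α) = Real.exp (1 / α) := by
      rw [← hlog, Real.exp_log (div_pos hA hd)]
    have hAeq : A = (B - S / α) * Real.exp (1 / α) := by
      rw [(div_eq_iff hd.ne').1 hexp]; ring
    set v := 1 / α - B / S with hv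
    have hv1 : -1 ≤ v := by
      have h1 : 0 < 1 / α := by positivity
      have h2 : B / S ≤ 1 := (div_le_one hS).2 hBS
      rw [hv]; linarith
    have hvev : v * Real.exp v = -(A * Real.exp (-(B / S))) / S := by
      rw [hv, hAeq]
      have h7 : Real.exp (1 / α - B / S) = Real.exp (1 / α) * Real.exp (-(B / S)) := by
        rw [← Real.exp_add]; ring_nf
      rw [h7]
      field_simp
      ring
    have hveq : v = w := by
      apply mulexp_strictMonoOn.injOn (Set.mem_Ici.2 hv1) (Set.mem_Ici.2 hw1)
      simp only
      rw [hvev, hwe]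
    have : 1 / α = w + B / S := by rw [← hveq, hv]; ring
    rw [← this, one_div, inv_inv]

/-- The Lambert-W closed form `α_B` is the unique positive solution of the
transcendental equation defining the base-demand competitive ratio (Corollary 5.2). -/
theorem osdm_base_alpha_unique_solution
    (pmin pmax c ε γ δ T : ℝ)
    (hpmin : 0 < pmin) (hp : pmin < pmax)
    (hc : 0 ≤ c) (hε : 0 ≤ ε) (hγ : 0 ≤ γ) (hδ : 0 ≤ δ) (hT : 1 ≤ T)
    (κ P : ℝ) (hκ : κ = γ + δ) (hP : P = (1 + c + ε) * pmax)
    (W : ℝ → ℝ)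
    (hW : ∀ z : ℝ, -Real.exp (-1) ≤ z → W z * Real.exp (W z) = z ∧ -1 ≤ W z)
    (hz : -Real.exp (-1) ≤
      -(((1 + c) * pmax - pmin)
          * Real.exp (-((P + 2 * δ + 2 * γ / T) / (P + 2 * κ))))
        / (P + 2 * κ))
    (αB : ℝ)
    (hαB : αB = (W (-(((1 + c) * pmax - pmin)
            * Real.exp (-((P + 2 * δ + 2 * γ / T) / (P + 2 * κ))))
          / (P + 2 * κ))
        + (P + 2 * δ + 2 * γ / T) / (P + 2 * κ))⁻¹)
    (hargB : 0 < ((1 + c) * pmax - pmin)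
        / ((1 + c) * pmax - (P + 2 * κ) / αB + 2 * γ / T + pmax * ε + 2 * δ)) :
    (0 < αB ∧
      1 = αB * Real.log (((1 + c) * pmax - pmin)
          / ((1 + c) * pmax - (P + 2 * κ) / αB + 2 * γ / T + pmax * ε + 2 * δ))) ∧
    ∀ α : ℝ, 0 < α →
      0 < ((1 + c) * pmax - pmin)
          / ((1 + c) * pmax - (P + 2 * κ) / α + 2 * γ / T + pmax * ε + 2 * δ) →
      1 = α * Real.log (((1 + c) * pmax - pmin)
          / ((1 + c) * pmax - (P + 2 * κ) / α + 2 * γ / T + pmax * ε + 2 * δ)) →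
      α = αB := by
  subst hκ hP
  have hpmax : 0 < pmax := hpmin.trans hp
  have hTpos : 0 < T := lt_of_lt_of_le one_pos hT
  have hdeneq : ∀ α : ℝ,
      (1 + c) * pmax - ((1 + c + ε) * pmax + 2 * (γ + δ)) / α + 2 * γ / T + pmax * ε + 2 * δ
        = ((1 + c + ε) * pmax + 2 * δ + 2 * γ / T)
          - ((1 + c + ε) * pmax + 2 * (γ + δ)) / α := fun α => by ring
  simp only [hdeneq] at hargB ⊢
  obtain ⟨hwe, hw1⟩ := hW _ hz
  have hA : 0 < (1 + c) * pmax - pmin := by nlinarith [mul_nonneg hc hpmax.le]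
  have hAB : (1 + c) * pmax - pmin < (1 + c + ε) * pmax + 2 * δ + 2 * γ / T := by
    have h1 : (1 + c + ε) * pmax = (1 + c) * pmax + ε * pmax := by ring
    have h2 : 0 ≤ 2 * γ / T := div_nonneg (by linarith) hTpos.le
    have h3 : 0 ≤ ε * pmax := mul_nonneg hε hpmax.le
    linarith
  have hBS : (1 + c + ε) * pmax + 2 * δ + 2 * γ / T ≤ (1 + c + ε) * pmax + 2 * (γ + δ) := by
    have := div_le_self (by linarith : (0:ℝ) ≤ 2 * γ) hT
    linarith
  have hS : 0 < (1 + c + ε) * pmax + 2 * (γ + δ) := by nlinarith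
  subst hαB
  exact key_lemma _ _ _ _ hA hAB hBS hS hw1 hwe
end
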